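/- Let u be a nonzero regular functional on ℂ[x] satisfying D(φu) = ψu, where φ(x) = ax² + bx + c and ψ(x) = px + q are nonzero polynomials of degrees ≤ 2 and ≤ 1 respectively, and let (P_n)_{n≥0} be the monic OPS of u. Set d_m = ma + p. Then for each n ≥ 0 the distributional Rodrigues formula holds: P_n u = k_n Dⁿ(φⁿ u), where k_n = ∏_{i=0}^{n−1} d_{n+i−1}^{−1}. -/

import Mathlib

open Polynomial

/-- Left multiplication of a linear functional `u` on `ℂ[X]` by a polynomial `φ`:
`⟨φu, p⟩ = ⟨u, φ·p⟩`. -/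
noncomputable def pmul (φ : ℂ[X]) (u : ℂ[X] →ₗ[ℂ] ℂ) : ℂ[X] →ₗ[ℂ] ℂ :=
  u ∘ₗ LinearMap.mulLeft ℂ φ

/-- Distributional derivative of a linear functional on `ℂ[X]`: `⟨Du, p⟩ = −⟨u, p′⟩`. -/
noncomputable def fder (u : ℂ[X] →ₗ[ℂ] ℂ) : ℂ[X] →ₗ[ℂ] ℂ :=
  -(u ∘ₗ (Polynomial.derivative : ℂ[X] →ₗ[ℂ] ℂ[X]))

/-- `(P n)` is a monic orthogonal polynomial sequence for the functional `u`. -/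
def IsMonicOPS (u : ℂ[X] →ₗ[ℂ] ℂ) (P : ℕ → ℂ[X]) : Prop :=
  (∀ n, (P n).Monic) ∧ (∀ n, (P n).natDegree = n) ∧
    (∀ m n : ℕ, m ≠ n → u (P m * P n) = 0) ∧ (∀ n, u (P n * P n) ≠ 0)

/-- A functional `u` on `ℂ[X]` is regular (quasi-definite). -/
def FRegular (u : ℂ[X] →ₗ[ℂ] ℂ) : Prop :=
  ∃ P : ℕ → ℂ[X], (∀ n, (P n).degree = n) ∧
    (∀ m n : ℕ, m ≠ n → u (P m * P n) = 0) ∧ (∀ n, u (P n * P n) ≠ 0)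

lemma pmul_apply (φ : ℂ[X]) (u : ℂ[X] →ₗ[ℂ] ℂ) (f : ℂ[X]) : pmul φ u f = u (φ * f) := rfl

lemma fder_apply (u : ℂ[X] →ₗ[ℂ] ℂ) (f : ℂ[X]) : fder u f = -u (derivative f) := rfl

section Aux
variable {u : ℂ[X] →ₗ[ℂ] ℂ} {P : ℕ → ℂ[X]}
variable (hmo : ∀ n, (P n).Monic) (hde : ∀ n, (P n).natDegree = n)
variable (hor : ∀ m n : ℕ, m ≠ n → u (P m * P n) = 0) (hnz : ∀ n, u (P n * P n) ≠ 0)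

include hmo hde in
lemma P_zero : P 0 = 1 := by
  have h := hmo 0
  have h2 := hde 0
  have := eq_C_of_natDegree_le_zero h2.le
  rw [this]
  have : (P 0).coeff 0 = 1 := by
    have := h.coeff_natDegree
    rwa [h2] at this
  rw [this, map_one]

include hmo hde hor in
lemma keyA : ∀ (d : ℕ) (π : ℂ[X]), π.natDegree ≤ d → ∀ M, d < M → u (π * P M) = 0 := by
  intro d
  induction d with
  | zero =>
    intro π hπ M hM
    rw [eq_C_of_natDegree_le_zero hπ, ← smul_eq_C_mul, map_smul]
    have hPM : u (P M) = 0 := by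
      have : P M = P M * P 0 := by rw [P_zero hmo hde, mul_one]
      rw [this]; exact hor M 0 (by omega)
    simp [hPM]
  | succ d ih =>
    intro π hπ M hM
    set s := π.coeff (d+1) with hs
    set ρ := π - C s * P (d+1) with hρ
    have hρd : ρ.natDegree ≤ d := by
      rw [natDegree_le_iff_coeff_eq_zero]
      intro N hN
      rcases Nat.lt_or_ge (d+1) N with h | h
      · have h1 : π.coeff N = 0 := natDegree_le_iff_coeff_eq_zero.mp hπ N h
        have h2 : (P (d+1)).coeff N = 0 := coeff_eq_zero_of_natDegree_lt (by rw [hde]; exact h)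
        simp [hρ, h1, h2]
      · have hN1 : N = d + 1 := by omega
        subst hN1
        have h2 : (P (d+1)).coeff (d+1) = 1 := by
          have := (hmo (d+1)).coeff_natDegree
          rwa [hde] at this
        simp [hρ, h2, ← hs]
    have hπeq : π = ρ + C s * P (d+1) := by rw [hρ]; ring
    rw [hπeq, add_mul, map_add, ih ρ hρd M (by omega), ← smul_eq_C_mul, smul_mul_assoc,
      map_smul, hor (d+1) M (by omega)]
    simp

include hmo hde hor in
lemma keyB : ∀ (M : ℕ) (π : ℂ[X]), π.natDegree ≤ M →
    u (π * P M) = π.coeff M * u (P M * P M) := by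
  intro M π hπ
  set s := π.coeff M with hs
  set ρ := π - C s * P M with hρ
  have hco : ∀ N, M ≤ N → ρ.coeff N = 0 := by
    intro N hN
    rcases Nat.lt_or_ge M N with h | h
    · have h1 : π.coeff N = 0 := natDegree_le_iff_coeff_eq_zero.mp hπ N h
      have h2 : (P M).coeff N = 0 := coeff_eq_zero_of_natDegree_lt (by rw [hde]; exact h)
      simp [hρ, h1, h2]
    · have hN1 : N = M := by omega
      have h2 : (P M).coeff M = 1 := by
        have := (hmo M).coeff_natDegree
        rwa [hde] at this
      simp [hρ, hN1, h2, ← hs]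
  have hz : u (ρ * P M) = 0 := by
    rcases Nat.eq_zero_or_pos M with h0 | h0
    · subst h0
      have : ρ = 0 := by
        ext N
        exact hco N (Nat.zero_le N)
      simp [this]
    · exact keyA hmo hde hor (M-1) ρ
        (natDegree_le_iff_coeff_eq_zero.mpr (fun N hN => hco N (by omega))) M (by omega)
  have hπeq : π = ρ + C s * P M := by rw [hρ]; ring
  rw [hπeq, add_mul, map_add, hz, ← smul_eq_C_mul, smul_mul_assoc, map_smul]
  simp

include hmo hde hor hnz in
lemma test_zero (π : ℂ[X]) (h : ∀ k, u (π * P k) = 0) : π = 0 := by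
  by_contra h0
  have := keyB hmo hde hor π.natDegree π le_rfl
  rw [h π.natDegree] at this
  have hlc : π.coeff π.natDegree ≠ 0 := by
    rw [coeff_natDegree]
    exact leadingCoeff_ne_zero.mpr h0
  exact (mul_ne_zero hlc (hnz π.natDegree)) this.symm

include hmo hde hor hnz in
lemma char (S : ℂ[X]) (n : ℕ) (hS : S.natDegree ≤ n) (h0 : ∀ m, m < n → u (S * P m) = 0) :
    S = C (S.coeff n) * P n := by
  set ρ := S - C (S.coeff n) * P n with hρ
  have hco : ∀ N, n ≤ N → ρ.coeff N = 0 := by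
    intro N hN
    rcases Nat.lt_or_ge n N with h | h
    · have h1 : S.coeff N = 0 := natDegree_le_iff_coeff_eq_zero.mp hS N h
      have h2 : (P n).coeff N = 0 := coeff_eq_zero_of_natDegree_lt (by rw [hde]; exact h)
      simp [hρ, h1, h2]
    · have hN1 : N = n := by omega
      have h2 : (P n).coeff n = 1 := by
        have := (hmo n).coeff_natDegree
        rwa [hde] at this
      simp [hρ, hN1, h2]
  have : ρ = 0 := by
    apply test_zero hmo hde hor hnz
    intro k
    rcases Nat.lt_or_ge k n with hk | hk
    · have : ρ * P k = S * P k - C (S.coeff n) * (P n * P k) := by rw [hρ]; ring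
      rw [this, map_sub, h0 k hk, ← smul_eq_C_mul, map_smul, hor n k (by omega)]
      simp
    · rcases Nat.eq_zero_or_pos k with h0' | h0'
      · have hn0 : n = 0 := by omega
        subst hn0 h0'
        have : ρ = 0 := by ext N; exact hco N (Nat.zero_le N)
        simp [this]
      · exact keyA hmo hde hor (k-1) ρ
          (natDegree_le_iff_coeff_eq_zero.mpr (fun N hN => hco N (by omega))) k (by omega)
  have := sub_eq_zero.mp this
  exact this

end Aux

section Pearson
variable {u : ℂ[X] →ₗ[ℂ] ℂ} {φ ψ : ℂ[X]}
variable (hPearson : fder (pmul φ u) = pmul ψ u)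

include hPearson in
lemma pear : ∀ r : ℂ[X], u (ψ * r) = -u (φ * derivative r) := by
  intro r
  have := LinearMap.congr_fun hPearson r
  rw [fder_apply, pmul_apply, pmul_apply] at this
  exact this.symm

include hPearson in
lemma pear2 : ∀ r : ℂ[X], u (φ * derivative r + ψ * r) = 0 := by
  intro r
  rw [map_add, pear hPearson r]
  ring

include hPearson in
lemma sym_rel : ∀ f g : ℂ[X],
    u ((φ * derivative (derivative f) + ψ * derivative f) * g) = -u (φ * (derivative f * derivative g)) := by
  intro f g
  have h0 := pear2 hPearson (derivative f * g)
  have e1 : φ * derivative (derivative f * g) + ψ * (derivative f * g)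
      = (φ * derivative (derivative f) + ψ * derivative f) * g + φ * (derivative f * derivative g) := by
    rw [derivative_mul]; ring
  rw [e1, map_add] at h0
  exact eq_neg_of_add_eq_zero_left h0
end Pearson

lemma der_zero_of_le {f : ℂ[X]} (h : f.natDegree ≤ 0) : derivative f = 0 := by
  rw [eq_C_of_natDegree_le_zero h]; simp

lemma Tdeg {φ ψ : ℂ[X]} (hφd : φ.natDegree ≤ 2) (hψd : ψ.natDegree ≤ 1)
    {P : ℕ → ℂ[X]} (hde : ∀ n, (P n).natDegree = n) :
    ∀ r : ℕ, (φ * derivative (derivative (P r)) + ψ * derivative (P r)).natDegree ≤ r := by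
  intro r
  match r with
  | 0 =>
    have h1 : derivative (P 0) = 0 := der_zero_of_le (le_of_eq (hde 0))
    simp [h1]
  | 1 =>
    have h1 : (derivative (P 1)).natDegree ≤ 0 := by
      have := natDegree_derivative_le (P 1)
      rw [hde 1] at this
      simpa using this
    have h2 : derivative (derivative (P 1)) = 0 := der_zero_of_le h1
    rw [h2, mul_zero, zero_add]
    calc (ψ * derivative (P 1)).natDegree ≤ ψ.natDegree + (derivative (P 1)).natDegree :=
          natDegree_mul_le
      _ ≤ 1 + 0 := add_le_add hψd h1
      _ ≤ 1 := by omega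
  | (j+2) =>
    have h1 : (derivative (P (j+2))).natDegree ≤ j+1 := by
      have := natDegree_derivative_le (P (j+2))
      rw [hde] at this
      omega
    have h2 : (derivative (derivative (P (j+2)))).natDegree ≤ j := by
      have := natDegree_derivative_le (derivative (P (j+2)))
      omega
    refine le_trans (natDegree_add_le _ _) (max_le ?_ ?_)
    · calc (φ * derivative (derivative (P (j+2)))).natDegree
          ≤ φ.natDegree + (derivative (derivative (P (j+2)))).natDegree := natDegree_mul_le
        _ ≤ 2 + j := add_le_add hφd h2
        _ ≤ j + 2 := by omega
    · calc (ψ * derivative (P (j+2))).natDegree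
          ≤ ψ.natDegree + (derivative (P (j+2))).natDegree := natDegree_mul_le
        _ ≤ 1 + (j+1) := add_le_add hψd h1
        _ ≤ j + 2 := by omega

lemma dne {u : ℂ[X] →ₗ[ℂ] ℂ} {a b c p q : ℂ} {φ ψ : ℂ[X]}
    (hφ : φ = C a * X ^ 2 + C b * X + C c) (hψ : ψ = C p * X + C q)
    (hφ0 : φ ≠ 0) (hψ0 : ψ ≠ 0)
    {P : ℕ → ℂ[X]}
    (hmo : ∀ n, (P n).Monic) (hde : ∀ n, (P n).natDegree = n)
    (hor : ∀ m n : ℕ, m ≠ n → u (P m * P n) = 0) (hnz : ∀ n, u (P n * P n) ≠ 0)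
    (hPearson : fder (pmul φ u) = pmul ψ u) :
    ∀ m : ℕ, (m : ℂ) * a + p ≠ 0 := by
  have hφd : φ.natDegree ≤ 2 := by rw [hφ]; compute_degree
  have hψd : ψ.natDegree ≤ 1 := by rw [hψ]; compute_degree
  have hu1 : u 1 ≠ 0 := by
    have := hnz 0
    rwa [P_zero hmo hde, one_mul] at this
  intro m
  match m with
  | 0 =>
    simp only [Nat.cast_zero, zero_mul, zero_add]
    intro hp
    have h1 := pear hPearson 1
    rw [mul_one, derivative_one, mul_zero, map_zero, neg_zero] at h1
    rw [hψ, map_add] at h1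
    have e1 : C p * X = p • (X : ℂ[X]) := by rw [smul_eq_C_mul]
    have e2 : (C q : ℂ[X]) = q • (1 : ℂ[X]) := by rw [smul_eq_C_mul, mul_one]
    rw [e1, e2, map_smul, map_smul, hp] at h1
    simp only [zero_smul, smul_eq_mul, zero_mul, zero_add] at h1
    have hq : q = 0 := by
      rcases mul_eq_zero.mp h1 with h | h
      · exact h
      · exact absurd h hu1
    apply hψ0
    rw [hψ, hp, hq]
    simp
  | (k+1) =>
    intro hdm
    -- the second order differential relation
    have hSdeg := Tdeg hφd hψd hde (k+2)
    have hOrth : ∀ m0, m0 < k+2 →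
        u ((φ * derivative (derivative (P (k+2))) + ψ * derivative (P (k+2))) * P m0) = 0 := by
      intro m0 hm0
      have e1 := sym_rel hPearson (P (k+2)) (P m0)
      have e2 := sym_rel hPearson (P m0) (P (k+2))
      have e3 : φ * (derivative (P (k+2)) * derivative (P m0))
          = φ * (derivative (P m0) * derivative (P (k+2))) := by ring
      rw [e3] at e1
      rw [e1, ← e2]
      exact keyA hmo hde hor m0 _ (Tdeg hφd hψd hde m0) (k+2) hm0
    have hchar := char hmo hde hor hnz _ (k+2) hSdeg hOrth
    -- compute the coefficient
    have hPc : (P (k+2)).coeff (k+2) = 1 := by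
      have := (hmo (k+2)).coeff_natDegree
      rwa [hde] at this
    have hD1deg : (derivative (P (k+2))).natDegree ≤ k+1 := by
      have := natDegree_derivative_le (P (k+2))
      rw [hde] at this
      omega
    have hD2deg : (derivative (derivative (P (k+2)))).natDegree ≤ k := by
      have := natDegree_derivative_le (derivative (P (k+2)))
      omega
    have c1 : (derivative (P (k+2))).coeff (k+1) = ((k+1:ℕ):ℂ) + 1 := by
      rw [coeff_derivative, hPc, one_mul]
    have c2 : (derivative (derivative (P (k+2)))).coeff k = (((k:ℕ):ℂ)+1) * (((k+1:ℕ):ℂ)+1) := by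
      rw [coeff_derivative, c1]
      ring
    have z1 : (derivative (P (k+2))).coeff (k+2) = 0 :=
      coeff_eq_zero_of_natDegree_lt (by omega)
    have z2 : (derivative (derivative (P (k+2)))).coeff (k+1) = 0 :=
      coeff_eq_zero_of_natDegree_lt (by omega)
    have z3 : (derivative (derivative (P (k+2)))).coeff (k+2) = 0 :=
      coeff_eq_zero_of_natDegree_lt (by omega)
    have eφ : (φ * derivative (derivative (P (k+2)))).coeff (k+2)
        = a * (derivative (derivative (P (k+2)))).coeff k := by
      rw [hφ]
      have e : (C a * X^2 + C b * X + C c) * derivative (derivative (P (k+2)))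
          = C a * (X^2 * derivative (derivative (P (k+2))))
            + C b * (X * derivative (derivative (P (k+2))))
            + C c * derivative (derivative (P (k+2))) := by ring
      rw [e, coeff_add, coeff_add, coeff_C_mul, coeff_C_mul, coeff_C_mul]
      rw [coeff_X_pow_mul]
      rw [show k+2 = (k+1)+1 from rfl, coeff_X_mul]
      rw [z2, show (k+1)+1 = k+2 from rfl, z3]
      ring
    have eψ : (ψ * derivative (P (k+2))).coeff (k+2)
        = p * (derivative (P (k+2))).coeff (k+1) := by
      rw [hψ]
      have e : (C p * X + C q) * derivative (P (k+2))
          = C p * (X * derivative (P (k+2))) + C q * derivative (P (k+2)) := by ring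
      rw [e, coeff_add, coeff_C_mul, coeff_C_mul]
      rw [show k+2 = (k+1)+1 from rfl, coeff_X_mul]
      rw [show (k+1)+1 = k+2 from rfl, z1]
      ring
    have hc : (φ * derivative (derivative (P (k+2))) + ψ * derivative (P (k+2))).coeff (k+2)
        = ((k+2:ℕ):ℂ) * (((k+1:ℕ):ℂ) * a + p) := by
      rw [coeff_add, eφ, eψ, c2, c1]
      push_cast
      ring
    rw [hc, hdm, mul_zero, map_zero, zero_mul] at hchar
    -- hchar : φ * D2 + ψ * D1 = 0
    have hstep : ∀ f : ℂ[X], u (φ * derivative (P (k+2)) * derivative f) = 0 := by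
      intro f
      have h0 := pear2 hPearson (derivative (P (k+2)) * f)
      have e : φ * derivative (derivative (P (k+2)) * f) + ψ * (derivative (P (k+2)) * f)
          = (φ * derivative (derivative (P (k+2))) + ψ * derivative (P (k+2))) * f
            + φ * derivative (P (k+2)) * derivative f := by
        rw [derivative_mul]; ring
      rw [e, hchar, zero_mul, zero_add] at h0
      exact h0
    have hmono : ∀ j : ℕ, u (φ * derivative (P (k+2)) * X^j) = 0 := by
      intro j
      have hj : ((j:ℂ)+1) ≠ 0 := Nat.cast_add_one_ne_zero j
      have hf : derivative (C (((j:ℂ)+1)⁻¹) * X^(j+1)) = X^j := by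
        rw [derivative_C_mul, derivative_X_pow, ← mul_assoc, ← C_mul, Nat.add_sub_cancel]
        push_cast
        rw [inv_mul_cancel₀ hj, C_1, one_mul]
      have := hstep (C (((j:ℂ)+1)⁻¹) * X^(j+1))
      rwa [hf] at this
    have hall : ∀ g : ℂ[X], u (φ * derivative (P (k+2)) * g) = 0 := by
      intro g
      induction g using Polynomial.induction_on' with
      | add f g hf hg => rw [mul_add, map_add, hf, hg, add_zero]
      | monomial j t =>
        rw [← C_mul_X_pow_eq_monomial]
        have e : φ * derivative (P (k+2)) * (C t * X^j)
            = t • (φ * derivative (P (k+2)) * X^j) := by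
          rw [smul_eq_C_mul]; ring
        rw [e, map_smul, hmono j, smul_zero]
    have hzero : φ * derivative (P (k+2)) = 0 :=
      test_zero hmo hde hor hnz _ (fun k' => hall (P k'))
    rcases mul_eq_zero.mp hzero with h | h
    · exact hφ0 h
    · have := natDegree_eq_zero_of_derivative_eq_zero h
      rw [hde] at this
      omega

noncomputable def Sseq (φ ψ : ℂ[X]) (n : ℕ) : ℕ → ℂ[X]
  | 0 => 1
  | j+1 => derivative (Sseq φ ψ n j) * φ
      + Sseq φ ψ n j * (ψ + C ((n:ℂ) - (j:ℂ) - 1) * derivative φ)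

lemma phi_der_pow (φ : ℂ[X]) (t : ℕ) :
    φ * derivative (φ^t) = C ((t:ℕ):ℂ) * derivative φ * φ^t := by
  cases t with
  | zero => simp
  | succ s =>
    rw [derivative_pow, Nat.add_sub_cancel]
    ring

lemma step {u : ℂ[X] →ₗ[ℂ] ℂ} {φ ψ : ℂ[X]}
    (hPearson : fder (pmul φ u) = pmul ψ u) (π : ℂ[X]) (t : ℕ) :
    fder (pmul (π * φ^(t+1)) u)
      = pmul ((derivative π * φ + π * (ψ + C ((t:ℕ):ℂ) * derivative φ)) * φ^t) u := by
  apply LinearMap.ext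
  intro r
  have h1 := phi_der_pow φ t
  have hkey : (derivative π * φ + π * (ψ + C ((t:ℕ):ℂ) * derivative φ)) * φ^t * r
      = (φ * derivative (π * φ^t * r) + ψ * (π * φ^t * r)) - π * φ^(t+1) * derivative r := by
    rw [derivative_mul, derivative_mul]
    linear_combination (-(π * r)) * h1
  rw [fder_apply, pmul_apply, pmul_apply, hkey, map_sub, pear2 hPearson, zero_sub]

lemma iter {u : ℂ[X] →ₗ[ℂ] ℂ} {φ ψ : ℂ[X]}
    (hPearson : fder (pmul φ u) = pmul ψ u) (n : ℕ) :
    ∀ j, j ≤ n → fder^[j] (pmul (φ^n) u) = pmul (Sseq φ ψ n j * φ^(n-j)) u := by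
  intro j
  induction j with
  | zero =>
    intro _
    simp only [Function.iterate_zero, id_eq, Nat.sub_zero]
    rw [show Sseq φ ψ n 0 = 1 from rfl, one_mul]
  | succ j ih =>
    intro hj
    have hj' : j ≤ n := by omega
    rw [Function.iterate_succ_apply', ih hj']
    have ht : n - j = (n - (j+1)) + 1 := by omega
    rw [ht, step hPearson]
    have hcast : (((n - (j+1) : ℕ)):ℂ) = (n:ℂ) - (j:ℂ) - 1 := by
      rw [Nat.cast_sub hj]
      push_cast
      ring
    rw [show Sseq φ ψ n (j+1) = derivative (Sseq φ ψ n j) * φ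
        + Sseq φ ψ n j * (ψ + C ((n:ℂ) - (j:ℂ) - 1) * derivative φ) from rfl, hcast]

lemma Sdeg {φ ψ : ℂ[X]} (hφd : φ.natDegree ≤ 2) (hψd : ψ.natDegree ≤ 1) (n : ℕ) :
    ∀ j, (Sseq φ ψ n j).natDegree ≤ j := by
  intro j
  induction j with
  | zero => rw [show Sseq φ ψ n 0 = 1 from rfl]; simp
  | succ j ih =>
    rw [show Sseq φ ψ n (j+1) = derivative (Sseq φ ψ n j) * φ
        + Sseq φ ψ n j * (ψ + C ((n:ℂ) - (j:ℂ) - 1) * derivative φ) from rfl]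
    refine le_trans (natDegree_add_le _ _) (max_le ?_ ?_)
    · cases j with
      | zero =>
        have h0 : derivative (Sseq φ ψ n 0) = 0 := der_zero_of_le (by simpa using ih)
        rw [h0, zero_mul]
        simp
      | succ i =>
        calc (derivative (Sseq φ ψ n (i+1)) * φ).natDegree
            ≤ (derivative (Sseq φ ψ n (i+1))).natDegree + φ.natDegree := natDegree_mul_le
          _ ≤ i + 2 := by
              have := natDegree_derivative_le (Sseq φ ψ n (i+1))
              omega
          _ ≤ (i+1) + 1 := by omega
    · have hφ' : (derivative φ).natDegree ≤ 1 := by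
        have := natDegree_derivative_le φ
        omega
      have h2 : (ψ + C ((n:ℂ) - (j:ℂ) - 1) * derivative φ).natDegree ≤ 1 := by
        refine le_trans (natDegree_add_le _ _) (max_le hψd ?_)
        exact le_trans (natDegree_C_mul_le _ _) hφ'
      calc (Sseq φ ψ n j * (ψ + C ((n:ℂ) - (j:ℂ) - 1) * derivative φ)).natDegree
          ≤ (Sseq φ ψ n j).natDegree
            + (ψ + C ((n:ℂ) - (j:ℂ) - 1) * derivative φ).natDegree := natDegree_mul_le
        _ ≤ j + 1 := add_le_add ih h2

lemma coeff_mul_phi {a b c : ℂ} {φ : ℂ[X]} (hφ : φ = C a * X ^ 2 + C b * X + C c)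
    (f : ℂ[X]) (d : ℕ) (hf : f.natDegree ≤ d) : (f * φ).coeff (d+2) = a * f.coeff d := by
  have z : ∀ N, d < N → f.coeff N = 0 := fun N hN =>
    coeff_eq_zero_of_natDegree_lt (by omega)
  rw [hφ]
  have e : f * (C a * X^2 + C b * X + C c)
      = C a * (f * X^2) + C b * (f * X^1) + C c * f := by ring
  rw [e, coeff_add, coeff_add, coeff_C_mul, coeff_C_mul, coeff_C_mul,
    coeff_mul_X_pow', coeff_mul_X_pow']
  rw [if_pos (by omega : 2 ≤ d+2), if_pos (by omega : 1 ≤ d+2),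
    show d+2-2 = d from by omega, show d+2-1 = d+1 from by omega,
    z (d+1) (by omega), z (d+2) (by omega)]
  ring

lemma coeff_mul_psi {p q : ℂ} {ψ : ℂ[X]} (hψ : ψ = C p * X + C q)
    (f : ℂ[X]) (d : ℕ) (hf : f.natDegree ≤ d) : (f * ψ).coeff (d+1) = p * f.coeff d := by
  have z : ∀ N, d < N → f.coeff N = 0 := fun N hN =>
    coeff_eq_zero_of_natDegree_lt (by omega)
  rw [hψ]
  have e : f * (C p * X + C q) = C p * (f * X^1) + C q * f := by ring
  rw [e, coeff_add, coeff_C_mul, coeff_C_mul, coeff_mul_X_pow']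
  rw [if_pos (by omega : 1 ≤ d+1), show d+1-1 = d from by omega, z (d+1) (by omega)]
  ring

lemma coeff_mul_dphi {a b c : ℂ} {φ : ℂ[X]} (hφ : φ = C a * X ^ 2 + C b * X + C c)
    (f : ℂ[X]) (d : ℕ) (hf : f.natDegree ≤ d) :
    (f * derivative φ).coeff (d+1) = 2 * a * f.coeff d := by
  have hφ' : derivative φ = C (2*a) * X + C b := by
    rw [hφ]
    simp [derivative_X_pow, C_mul]
    rw [show (C 2 : ℂ[X]) = 2 from map_ofNat C 2]
    ring
  have z : ∀ N, d < N → f.coeff N = 0 := fun N hN =>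
    coeff_eq_zero_of_natDegree_lt (by omega)
  rw [hφ']
  have e : f * (C (2*a) * X + C b) = C (2*a) * (f * X^1) + C b * f := by ring
  rw [e, coeff_add, coeff_C_mul, coeff_C_mul, coeff_mul_X_pow']
  rw [if_pos (by omega : 1 ≤ d+1), show d+1-1 = d from by omega, z (d+1) (by omega)]
  ring

lemma Scoeff {a b c p q : ℂ} {φ ψ : ℂ[X]}
    (hφ : φ = C a * X ^ 2 + C b * X + C c) (hψ : ψ = C p * X + C q) (n : ℕ) :
    ∀ j, (Sseq φ ψ n j).coeff j
      = ∏ i ∈ Finset.range j, ((2*(n:ℂ) - (i:ℂ) - 2) * a + p) := by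
  have hφd : φ.natDegree ≤ 2 := by rw [hφ]; compute_degree
  have hψd : ψ.natDegree ≤ 1 := by rw [hψ]; compute_degree
  intro j
  induction j with
  | zero => rw [show Sseq φ ψ n 0 = 1 from rfl]; simp
  | succ j ih =>
    have e : Sseq φ ψ n (j+1) = derivative (Sseq φ ψ n j) * φ
        + (Sseq φ ψ n j * ψ + C ((n:ℂ) - (j:ℂ) - 1) * (Sseq φ ψ n j * derivative φ)) := by
      rw [show Sseq φ ψ n (j+1) = derivative (Sseq φ ψ n j) * φ
        + Sseq φ ψ n j * (ψ + C ((n:ℂ) - (j:ℂ) - 1) * derivative φ) from rfl]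
      ring
    have hSd := Sdeg hφd hψd n j
    have t2 : (Sseq φ ψ n j * ψ).coeff (j+1) = p * (Sseq φ ψ n j).coeff j :=
      coeff_mul_psi hψ _ j hSd
    have t3 : (C ((n:ℂ) - (j:ℂ) - 1) * (Sseq φ ψ n j * derivative φ)).coeff (j+1)
        = ((n:ℂ) - (j:ℂ) - 1) * (2 * a * (Sseq φ ψ n j).coeff j) := by
      rw [coeff_C_mul, coeff_mul_dphi hφ _ j hSd]
    rw [e, coeff_add, coeff_add, t2, t3, Finset.prod_range_succ, ← ih]
    cases j with
    | zero =>
      have h0 : derivative (Sseq φ ψ n 0) = 0 := by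
        rw [show Sseq φ ψ n 0 = 1 from rfl]; simp
      rw [h0, zero_mul]
      simp only [coeff_zero, zero_add]
      push_cast
      ring
    | succ i =>
      have hd' : (derivative (Sseq φ ψ n (i+1))).natDegree ≤ i := by
        have := natDegree_derivative_le (Sseq φ ψ n (i+1))
        have := Sdeg hφd hψd n (i+1)
        omega
      have t1 : (derivative (Sseq φ ψ n (i+1)) * φ).coeff (i+1+1)
          = a * (derivative (Sseq φ ψ n (i+1))).coeff i :=
        coeff_mul_phi hφ (derivative (Sseq φ ψ n (i+1))) i hd'
      have t1' : (derivative (Sseq φ ψ n (i+1))).coeff i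
          = (Sseq φ ψ n (i+1)).coeff (i+1) * ((i:ℂ)+1) := coeff_derivative _ i
      rw [t1, t1']
      push_cast
      ring

lemma fder_iter_apply (v : ℂ[X] →ₗ[ℂ] ℂ) :
    ∀ (n : ℕ) (f : ℂ[X]), fder^[n] v f = (-1)^n * v (derivative^[n] f) := by
  intro n
  induction n with
  | zero => intro f; simp
  | succ n ih =>
    intro f
    rw [Function.iterate_succ_apply', fder_apply, ih (derivative f),
      Function.iterate_succ_apply]
    ring

lemma pmul_C_mul (t : ℂ) (f : ℂ[X]) (u : ℂ[X] →ₗ[ℂ] ℂ) :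
    pmul (C t * f) u = t • pmul f u := by
  apply LinearMap.ext
  intro r
  rw [pmul_apply, LinearMap.smul_apply, pmul_apply]
  have e : C t * f * r = t • (f * r) := by rw [smul_eq_C_mul]; ring
  rw [e, map_smul]

/-- distributional Rodrigues formula: if the nonzero regular functional `u`
satisfies `D(φu) = ψu` with `φ = ax² + bx + c`, `ψ = px + q` nonzero, and `(P n)` is its
monic OPS, then `P_n u = k_n Dⁿ(φⁿu)` with `k_n = ∏_{i=0}^{n−1} ((n+i−1)a + p)⁻¹`. -/
theorem stmt14 (u : ℂ[X] →ₗ[ℂ] ℂ) (hu : u ≠ 0) (a b c p q : ℂ) (φ ψ : ℂ[X])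
    (hφ : φ = C a * X ^ 2 + C b * X + C c) (hψ : ψ = C p * X + C q)
    (hφ0 : φ ≠ 0) (hψ0 : ψ ≠ 0)
    (P : ℕ → ℂ[X]) (hOPS : IsMonicOPS u P)
    (hPearson : fder (pmul φ u) = pmul ψ u) :
    ∀ n : ℕ, pmul (P n) u =
      (∏ i ∈ Finset.range n, (((n : ℂ) + (i : ℂ) - 1) * a + p)⁻¹) •
        fder^[n] (pmul (φ ^ n) u) := by
  obtain ⟨hmo, hde, hor, hnz⟩ := hOPS
  have hφd : φ.natDegree ≤ 2 := by rw [hφ]; compute_degree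
  have hψd : ψ.natDegree ≤ 1 := by rw [hψ]; compute_degree
  have hd := dne hφ hψ hφ0 hψ0 hmo hde hor hnz hPearson
  intro n
  have hiter := iter hPearson n n le_rfl
  rw [Nat.sub_self, pow_zero, mul_one] at hiter
  have hprod : (∏ i ∈ Finset.range n, ((2*(n:ℂ) - (i:ℂ) - 2) * a + p))
      = ∏ i ∈ Finset.range n, (((n:ℂ) + (i:ℂ) - 1) * a + p) := by
    cases n with
    | zero => simp
    | succ m =>
      have h1 : ∀ i ∈ Finset.range (m+1),
          (2*(((m+1:ℕ)):ℂ) - (i:ℂ) - 2) * a + p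
            = (((m + (m - i) : ℕ)):ℂ) * a + p := by
        intro i hi
        have hi' : i < m+1 := Finset.mem_range.mp hi
        have : (((m + (m - i) : ℕ)):ℂ) = 2*(((m+1:ℕ)):ℂ) - (i:ℂ) - 2 := by
          rw [Nat.cast_add, Nat.cast_sub (by omega : i ≤ m)]
          push_cast
          ring
        rw [this]
      have h2 : ∀ i ∈ Finset.range (m+1),
          ((((m+1:ℕ)):ℂ) + (i:ℂ) - 1) * a + p
            = (((m + i : ℕ)):ℂ) * a + p := by
        intro i hi
        have : (((m + i : ℕ)):ℂ) = (((m+1:ℕ)):ℂ) + (i:ℂ) - 1 := by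
          push_cast
          ring
        rw [this]
      rw [Finset.prod_congr rfl h1, Finset.prod_congr rfl h2]
      have := Finset.prod_range_reflect (fun j => (((m + j : ℕ)):ℂ) * a + p) (m+1)
      simp only [Nat.add_sub_cancel] at this
      exact this
  have hc : (Sseq φ ψ n n).coeff n
      = ∏ i ∈ Finset.range n, (((n:ℂ) + (i:ℂ) - 1) * a + p) :=
    (Scoeff hφ hψ n n).trans hprod
  have hterm : ∀ i ∈ Finset.range n, ((n:ℂ) + (i:ℂ) - 1) * a + p ≠ 0 := by
    intro i hi
    have hi' : i < n := Finset.mem_range.mp hi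
    have e : ((n:ℂ) + (i:ℂ) - 1) = ((n - 1 + i : ℕ):ℂ) := by
      rw [Nat.cast_add, Nat.cast_sub (by omega : 1 ≤ n)]
      push_cast
      ring
    rw [e]
    exact hd (n - 1 + i)
  have hprod0 : (∏ i ∈ Finset.range n, (((n:ℂ) + (i:ℂ) - 1) * a + p)) ≠ 0 :=
    Finset.prod_ne_zero_iff.mpr hterm
  have htests : ∀ m, m < n → u (Sseq φ ψ n n * P m) = 0 := by
    intro m hm
    have h1 : pmul (Sseq φ ψ n n) u (P m) = fder^[n] (pmul (φ^n) u) (P m) := by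
      rw [hiter]
    rw [pmul_apply] at h1
    rw [h1, fder_iter_apply, iterate_derivative_eq_zero (by rw [hde]; exact hm),
      map_zero, mul_zero]
  have hR := char hmo hde hor hnz (Sseq φ ψ n n) n (Sdeg hφd hψd n n) htests
  rw [hiter, hR, pmul_C_mul, smul_smul]
  have hone : (∏ i ∈ Finset.range n, (((n:ℂ) + (i:ℂ) - 1) * a + p)⁻¹)
      * (Sseq φ ψ n n).coeff n = 1 := by
    rw [hc, Finset.prod_inv_distrib, inv_mul_cancel₀ hprod0]
  rw [hone, one_smul]
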